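/- Let p ≥ 3 be a prime, r ≥ 3 an integer, and let c : ℤ_p → [r] be a rainbow 3-AP-free r-coloring such that the color c(0) is not used on any element of ℤ_p \ {0}. Then for every i ∈ ℤ_p \ {0}, we have c(−i) = c(i) and c(2i) = c(i). -/
import Mathlib


/-- An `r`-coloring of `ZMod p` is rainbow 3-AP-free if no 3-AP `(x, y, z)`
(meaning `x + z = 2y` and `y ≠ x`) receives three pairwise distinct colors. -/
def RainbowAPFreeZ {p r : ℕ} (c : ZMod p → Fin r) : Prop :=
  ∀ x y z : ZMod p, x + z = 2 * y → y ≠ x →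
    (c x = c y ∨ c y = c z ∨ c x = c z)

theorem stmt_18 (p r : ℕ) (hp : p.Prime) (hp3 : 3 ≤ p) (hr : 3 ≤ r)
    (c : ZMod p → Fin r) (hc : RainbowAPFreeZ c)
    (h0 : ∀ i : ZMod p, i ≠ 0 → c i ≠ c 0) :
    ∀ i : ZMod p, i ≠ 0 → c (-i) = c i ∧ c (2 * i) = c i := by
  intro i hi
  haveI : Fact p.Prime := ⟨hp⟩
  have hneg : (-i : ZMod p) ≠ 0 := neg_ne_zero.mpr hi
  have h2 : (2 : ZMod p) ≠ 0 := by
    intro h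
    have hd : (p : ℕ) ∣ 2 := (ZMod.natCast_eq_zero_iff 2 p).mp (by exact_mod_cast h)
    have := Nat.le_of_dvd (by norm_num) hd
    omega
  have h2i : (2 * i : ZMod p) ≠ 0 := mul_ne_zero h2 hi
  constructor
  · have := hc (-i) 0 i (by ring) (by symm; exact hneg)
    rcases this with h | h | h
    · exact absurd h (h0 _ hneg)
    · exact absurd h.symm (h0 _ hi)
    · exact h
  · have := hc 0 i (2 * i) (by ring) hi
    rcases this with h | h | h
    · exact absurd h.symm (h0 _ hi)
    · exact h.symm
    · exact absurd h.symm (h0 _ h2i)
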